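/- Let H = (V,F) be a directed hypergraph where each hyperedge e ∈ F has a set src(e) ⊆ V of source nodes and a destination dest(e) ∈ V, let S ⊆ V and t ∈ V, and let p_v (v ∈ V) be distinct variables. Define W = {p_s | s ∈ S} and D = {(⋀_{v ∈ src(e)} p_v : ⊤ / p_{dest(e)}) | e ∈ F} ∪ {(p_t : ⊤ / ⊥)}. Then t is hyperedge-reachable from S in H if and only if ⟨W,D⟩ has no stable extension. -/

import Mathlib

inductive Form : Type where
  | var : ℕ → Form
  | app : (n : ℕ) → ((Fin n → Bool) → Bool) → (Fin n → Form) → Form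

namespace Form

def eval (σ : ℕ → Bool) : Form → Bool
  | var x => σ x
  | app _ f a => f (fun i => (a i).eval σ)

def tru : Form := app 0 (fun _ => true) (fun i => i.elim0)
def fls : Form := app 0 (fun _ => false) (fun i => i.elim0)
def neg (φ : Form) : Form := app 1 (fun v => !(v 0)) (fun _ => φ)
def conj (φ ψ : Form) : Form := app 2 (fun v => v 0 && v 1) ![φ, ψ]
def disj (φ ψ : Form) : Form := app 2 (fun v => v 0 || v 1) ![φ, ψ]

end Form

/-- σ satisfies all formulae of A. -/
def Sat (σ : ℕ → Bool) (A : Set Form) : Prop := ∀ φ ∈ A, φ.eval σ = true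

/-- Semantic consequence A ⊨ φ. -/
def Entails (A : Set Form) (φ : Form) : Prop := ∀ σ, Sat σ A → φ.eval σ = true

/-- Th(A) = {φ | A ⊨ φ}. -/
def Th (A : Set Form) : Set Form := {φ | Entails A φ}

def Consistent (A : Set Form) : Prop := ∃ σ, Sat σ A

/-- A default rule (α : β / γ). -/
structure Default where
  pre : Form
  just : Form
  con : Form

/-- S contains W, is deductively closed, and closed under defaults applicable w.r.t. E. -/
def GammaClosed (W : Set Form) (D : Set Default) (E S : Set Form) : Prop :=
  W ⊆ S ∧ Th S = S ∧ ∀ d ∈ D, d.pre ∈ S → Form.neg d.just ∉ E → d.con ∈ S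

/-- Γ(E): the smallest set satisfying the three closure conditions. -/
def Gamma (W : Set Form) (D : Set Default) (E : Set Form) : Set Form :=
  ⋂₀ {S | GammaClosed W D E S}

/-- E is a stable extension of ⟨W,D⟩. -/
def Stable (W : Set Form) (D : Set Default) (E : Set Form) : Prop :=
  Gamma W D E = E


def bigConj (l : List Form) : Form := l.foldr Form.conj Form.tru

/-- Hyperedge-reachability in a directed hypergraph: edges are pairs of a list
of source nodes and a destination node. -/
inductive HReach {V : Type} (S : Set V) (F : Set (List V × V)) : V → Prop
  | base {v : V} : v ∈ S → HReach S F v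
  | step {e : List V × V} : e ∈ F → (∀ v ∈ e.1, HReach S F v) → HReach S F e.2

section Semantics

open Form

lemma Form.eval_conj (σ : ℕ → Bool) (φ ψ : Form) :
    (conj φ ψ).eval σ = (φ.eval σ && ψ.eval σ) := rfl

lemma eval_bigConj_eq_true {σ : ℕ → Bool} {l : List Form} :
    (bigConj l).eval σ = true ↔ ∀ φ ∈ l, φ.eval σ = true := by
  induction l with
  | nil => exact iff_of_true rfl (by simp)
  | cons φ l ih => simp [bigConj, Form.eval_conj, ← ih]

lemma subset_Th (A : Set Form) : A ⊆ Th A := fun _ hφ _ hσ => hσ _ hφ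

lemma Th_Th (A : Set Form) : Th (Th A) = Th A :=
  Set.Subset.antisymm (fun _ hφ σ hσ => hφ σ fun _ hψ => hψ σ hσ) (subset_Th _)

lemma mem_Th_of_fls_mem {A : Set Form} (h : fls ∈ A) (φ : Form) : φ ∈ Th A :=
  fun _ hσ => absurd (hσ _ h) Bool.false_ne_true

lemma neg_tru_notMem_Th {A : Set Form} (h : Consistent A) : neg tru ∉ Th A := by
  obtain ⟨σ, hσ⟩ := h
  exact fun hA => Bool.false_ne_true (hA σ hσ)

lemma Th_setOf_eval (σ : ℕ → Bool) : Th {φ | φ.eval σ = true} = {φ | φ.eval σ = true} :=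
  Set.Subset.antisymm (fun _ hφ => hφ σ fun _ hψ => hψ) (subset_Th _)

end Semantics

section DefaultLogic

variable {W : Set Form} {D : Set Default} {E X : Set Form}

lemma Gamma_subset (h : GammaClosed W D E X) : Gamma W D E ⊆ X :=
  Set.sInter_subset_of_mem h

lemma mem_Gamma_iff {φ : Form} :
    φ ∈ Gamma W D E ↔ ∀ X, GammaClosed W D E X → φ ∈ X :=
  Set.mem_sInter

lemma gammaClosed_setOf_eval {σ : ℕ → Bool} (hW : Sat σ W)
    (hD : ∀ d ∈ D, d.pre.eval σ = true → d.con.eval σ = true) :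
    GammaClosed W D E {φ | φ.eval σ = true} :=
  ⟨hW, Th_setOf_eval σ, fun d hd hpre _ => hD d hd hpre⟩

lemma Gamma_subset_Th_of_blocked (h : ∀ d ∈ D, Form.neg d.just ∈ E) :
    Gamma W D E ⊆ Th W :=
  Gamma_subset ⟨subset_Th W, Th_Th W, fun d hd _ hj => absurd (h d hd) hj⟩

lemma Gamma_eq_Gamma_empty_of_unblocked (h : ∀ d ∈ D, Form.neg d.just ∉ E) :
    Gamma W D E = Gamma W D ∅ := by
  have hclosed : ∀ X, GammaClosed W D E X ↔ GammaClosed W D ∅ X := fun _ =>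
    and_congr_right fun _ => and_congr_right fun _ => forall₂_congr fun d hd =>
      ⟨fun hX hpre _ => hX hpre (h d hd), fun hX hpre _ => hX hpre (Set.notMem_empty _)⟩
  simp only [Gamma, hclosed]

/-- With justifications all `⊤`, Γ(E) is `Th W` or Γ(∅) according as `¬⊤ ∈ E` or not; the first
is never stable when `W` is consistent, the second is stable exactly when `¬⊤ ∉ Γ(∅)`. -/
theorem exists_stable_iff_neg_tru_notMem_Gamma_empty (hW : Consistent W)
    (hD : ∀ d ∈ D, d.just = Form.tru) :
    (∃ E, Stable W D E) ↔ Form.neg Form.tru ∉ Gamma W D ∅ := by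
  constructor
  · rintro ⟨E, hE⟩
    by_cases hE_tru : Form.neg Form.tru ∈ E
    · have hblocked : ∀ d ∈ D, Form.neg d.just ∈ E := fun d hd => hD d hd ▸ hE_tru
      exact absurd (Gamma_subset_Th_of_blocked hblocked (hE.symm ▸ hE_tru))
        (neg_tru_notMem_Th hW)
    · have hunblocked : ∀ d ∈ D, Form.neg d.just ∉ E := fun d hd => hD d hd ▸ hE_tru
      rw [Stable, Gamma_eq_Gamma_empty_of_unblocked hunblocked] at hE
      exact hE ▸ hE_tru
  · intro hG
    exact ⟨Gamma W D ∅, Gamma_eq_Gamma_empty_of_unblocked fun d hd => hD d hd ▸ hG⟩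

end DefaultLogic

section Hypergraph

variable {V : Type} (F : Set (List V × V)) (S : Set V) (t : V) (p : V → ℕ)

def reachW : Set Form := {φ | ∃ s ∈ S, φ = Form.var (p s)}

def reachD : Set Default :=
  {d | ∃ e ∈ F, d = ⟨bigConj (e.1.map fun v => Form.var (p v)), Form.tru,
      Form.var (p e.2)⟩} ∪ {⟨Form.var (p t), Form.tru, Form.fls⟩}

open Classical in
noncomputable def reachModel : ℕ → Bool := fun n => decide (∃ v, HReach S F v ∧ p v = n)

variable {F S t p}

lemma reachW_consistent : Consistent (reachW S p) :=
  ⟨fun _ => true, by rintro _ ⟨s, _, rfl⟩; rfl⟩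

lemma reachD_just {d : Default} (hd : d ∈ reachD F t p) : d.just = Form.tru := by
  rcases hd with ⟨e, _, rfl⟩ | rfl <;> rfl

lemma var_mem_of_HReach (hX : GammaClosed (reachW S p) (reachD F t p) ∅ X) {v : V}
    (hv : HReach S F v) : Form.var (p v) ∈ X := by
  induction hv with
  | base hs => exact hX.1 ⟨_, hs, rfl⟩
  | @step e he _ ih =>
    have hpre : bigConj (e.1.map fun v => Form.var (p v)) ∈ X := by
      rw [← hX.2.1]
      intro σ hσ
      simp only [eval_bigConj_eq_true, List.forall_mem_map]
      exact fun u hu => hσ _ (ih u hu)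
    exact hX.2.2 _ (Or.inl ⟨e, he, rfl⟩) hpre (Set.notMem_empty _)

lemma neg_tru_mem_Gamma_of_HReach (ht : HReach S F t) :
    Form.neg Form.tru ∈ Gamma (reachW S p) (reachD F t p) ∅ := by
  refine mem_Gamma_iff.2 fun X hX => ?_
  have hfls : Form.fls ∈ X :=
    hX.2.2 _ (Or.inr rfl) (var_mem_of_HReach hX ht) (Set.notMem_empty _)
  exact hX.2.1 ▸ mem_Th_of_fls_mem hfls _

lemma eval_var_reachModel (hp : Function.Injective p) (v : V) :
    (Form.var (p v)).eval (reachModel F S p) = true ↔ HReach S F v := by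
  simp only [Form.eval, reachModel, decide_eq_true_eq, hp.eq_iff, exists_eq_right]

lemma neg_tru_notMem_Gamma_of_not_HReach (hp : Function.Injective p) (ht : ¬ HReach S F t) :
    Form.neg Form.tru ∉ Gamma (reachW S p) (reachD F t p) ∅ := by
  have hW : Sat (reachModel F S p) (reachW S p) := by
    rintro _ ⟨s, hs, rfl⟩
    exact (eval_var_reachModel hp s).2 (HReach.base hs)
  have hD : ∀ d ∈ reachD F t p,
      d.pre.eval (reachModel F S p) = true → d.con.eval (reachModel F S p) = true := by
    rintro _ (⟨e, he, rfl⟩ | rfl) hpre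
    · simp only [eval_bigConj_eq_true, List.forall_mem_map, eval_var_reachModel hp] at hpre
      exact (eval_var_reachModel hp e.2).2 (HReach.step he hpre)
    · exact absurd ((eval_var_reachModel hp t).1 hpre) ht
  exact fun h => Bool.false_ne_true (Gamma_subset (gammaClosed_setOf_eval hW hD) h)

end Hypergraph

theorem stmt17_general (V : Type) (F : Set (List V × V))
    (S : Set V) (t : V) (p : V → ℕ) (hp : Function.Injective p) :
    HReach S F t ↔
    ¬ ∃ E : Set Form,
        Stable {φ | ∃ s ∈ S, φ = Form.var (p s)}
          ({d | ∃ e ∈ F,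
              d = ⟨bigConj (e.1.map fun v => Form.var (p v)), Form.tru,
                   Form.var (p e.2)⟩} ∪
            {⟨Form.var (p t), Form.tru, Form.fls⟩}) E := by
  change HReach S F t ↔ ¬ ∃ E, Stable (reachW S p) (reachD F t p) E
  rw [exists_stable_iff_neg_tru_notMem_Gamma_empty reachW_consistent fun _ => reachD_just,
    not_not]
  exact ⟨neg_tru_mem_Gamma_of_HReach, fun h =>
    by_contra fun ht => neg_tru_notMem_Gamma_of_not_HReach hp ht h⟩

/-- t is hyperedge-reachable from S in H iff the associated default theory has
no stable extension. -/
theorem stmt17 (V : Type) (F : Set (List V × V)) (hF : F.Finite)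
    (S : Set V) (t : V) (p : V → ℕ) (hp : Function.Injective p) :
    HReach S F t ↔
    ¬ ∃ E : Set Form,
        Stable {φ | ∃ s ∈ S, φ = Form.var (p s)}
          ({d | ∃ e ∈ F,
              d = ⟨bigConj (e.1.map fun v => Form.var (p v)), Form.tru,
                   Form.var (p e.2)⟩} ∪
            {⟨Form.var (p t), Form.tru, Form.fls⟩}) E :=
  stmt17_general V F S t p hp
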